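/- arXiv:2403.00168 — 3 statements merged into one kernel-verified Lean document; each statement's English description precedes it below -/
import Mathlib

section
/- Let α > 1 and let X be a positive random variable. If there exists C > 0 such that for all sufficiently large x, P(X ≥ x) ≤ exp(−(1/C) log^α(1+x)), then there exists C' > 0 such that for all sufficiently large p, E[X^p] ≤ exp(C' p^(α/(α−1))). -/
open MeasureTheory Real Filter Set

/-! With `β = α/(α-1)` the conjugate exponent of `α`, Young's inequality gives
`p log(1+x) ≤ K p^β + log^α(1+x)/(2C)`, hence `X^p ≤ exp(K p^β) Y` for
`Y = exp(log^α(1+X)/(2C))`. The tail bound on `X` turns into `P(Y > t) ≤ t⁻²`, so `E[Y] < ∞`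
by the layer-cake formula, and `E[X^p] ≤ exp(K p^β) E[Y] ≤ exp((K+1) p^β)` once `p` is large. -/

theorem exists_mul_le_mul_rpow_add_mul_rpow {α β : ℝ} (hαβ : α.HolderConjugate β) {c : ℝ}
    (hc : 0 < c) : ∃ K > 0, ∀ p L : ℝ, 0 ≤ p → 0 ≤ L → p * L ≤ K * p ^ β + c * L ^ α := by
  have hα := hαβ.pos
  have hβ := hαβ.symm.pos
  set lam := (α * c) ^ (1 / α)
  have hlam : 0 < lam := by positivity
  have hlam_pow : lam ^ α = α * c := by
    rw [← rpow_mul (by positivity), one_div_mul_cancel hα.ne', rpow_one]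
  refine ⟨(1 / lam) ^ β / β, by positivity, fun p L hp hL => ?_⟩
  calc p * L = (lam * L) * (p / lam) := by field_simp
    _ ≤ (lam * L) ^ α / α + (p / lam) ^ β / β :=
      young_inequality_of_nonneg (by positivity) (by positivity) hαβ
    _ = (1 / lam) ^ β / β * p ^ β + c * L ^ α := by
      rw [mul_rpow hlam.le hL, hlam_pow, div_eq_mul_one_div p, mul_rpow hp (by positivity)]
      field_simp
      ring

theorem lintegral_ofReal_lt_top_of_meas_lt_le_rpow_neg {Ω : Type*} [MeasurableSpace Ω]
    {μ : Measure Ω} [IsFiniteMeasure μ] {Y : Ω → ℝ} (hY : AEMeasurable Y μ) (hY0 : 0 ≤ᵐ[μ] Y)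
    {q : ℝ} (hq : 1 < q) (htail : ∀ᶠ t in atTop, μ {ω | t < Y ω} ≤ ENNReal.ofReal (t ^ (-q))) :
    ∫⁻ ω, ENNReal.ofReal (Y ω) ∂μ < ⊤ := by
  rw [lintegral_eq_lintegral_meas_lt μ hY0 hY]
  obtain ⟨T, hT⟩ := eventually_atTop.1 htail
  have hT' : 0 < max T 1 := by positivity
  rw [← Ioc_union_Ioi_eq_Ioi hT'.le]
  refine (lintegral_union_le _ _ _).trans_lt (ENNReal.add_lt_top.2 ⟨?_, ?_⟩)
  · calc ∫⁻ t in Ioc 0 (max T 1), μ {ω | t < Y ω}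
        ≤ ∫⁻ _ in Ioc 0 (max T 1), μ univ := lintegral_mono fun _ => measure_mono (subset_univ _)
      _ = μ univ * volume (Ioc 0 (max T 1)) := setLIntegral_const _ _
      _ < ⊤ := ENNReal.mul_lt_top (measure_lt_top _ _) measure_Ioc_lt_top
  · calc ∫⁻ t in Ioi (max T 1), μ {ω | t < Y ω}
        ≤ ∫⁻ t in Ioi (max T 1), ENNReal.ofReal (t ^ (-q)) :=
          setLIntegral_mono' measurableSet_Ioi fun t ht => hT t ((le_max_left _ _).trans ht.le)
      _ < ⊤ := (integrableOn_Ioi_rpow_of_lt (by linarith) hT').lintegral_lt_top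

theorem meas_lt_exp_mul_log_rpow_le_rpow_neg {Ω : Type*} [MeasurableSpace Ω] {μ : Measure Ω}
    {α C q : ℝ} (hα : 0 < α) (hC : 0 < C) (hq : 0 < q) {X : Ω → ℝ} (hX : ∀ ω, 0 ≤ X ω)
    (htail : ∀ᶠ x : ℝ in atTop,
      μ {ω | x ≤ X ω} ≤ ENNReal.ofReal (exp (-(1 / C) * log (1 + x) ^ α))) :
    ∀ᶠ t : ℝ in atTop,
      μ {ω | t < exp ((q * C)⁻¹ * log (1 + X ω) ^ α)} ≤ ENNReal.ofReal (t ^ (-q)) := by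
  -- `x t` solves `log^α (1 + x t) = q C log t`
  let x : ℝ → ℝ := fun t => exp ((q * C * log t) ^ (1 / α)) - 1
  have hx : Tendsto x atTop atTop := by
    refine tendsto_atTop_add_const_right _ _ (tendsto_exp_atTop.comp ?_)
    exact (tendsto_rpow_atTop (by positivity)).comp
      (tendsto_log_atTop.const_mul_atTop (by positivity))
  filter_upwards [hx.eventually htail, eventually_gt_atTop 1] with t htx ht1
  set s := (q * C * log t) ^ (1 / α)
  have hlogt : 0 < log t := log_pos ht1
  have hs : s ^ α = q * C * log t := by
    rw [← rpow_mul (by positivity), one_div_mul_cancel hα.ne', rpow_one]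
  have hlog : log (1 + x t) = s := by
    rw [show 1 + x t = exp s by simp only [x, s, add_sub_cancel], log_exp]
  refine (measure_mono fun ω hω => ?_).trans (htx.trans_eq ?_)
  · have hL : 0 ≤ log (1 + X ω) := log_nonneg (by linarith [hX ω])
    have hsα : s ^ α < log (1 + X ω) ^ α := by
      have := log_lt_log (by positivity) hω
      rwa [log_exp, lt_inv_mul_iff₀ (by positivity), ← hs] at this
    have hsL : s < log (1 + X ω) := (rpow_lt_rpow_iff (by positivity) hL hα).1 hsα
    have := exp_lt_exp.2 hsL
    rw [exp_log (by linarith [hX ω])] at this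
    change exp s - 1 ≤ X ω
    linarith
  · rw [hlog, hs, rpow_def_of_pos (by linarith)]
    congr 2
    field_simp

theorem exists_lintegral_rpow_le_exp_of_lintegral_exp_lt_top {Ω : Type*} [MeasurableSpace Ω]
    {μ : Measure Ω} {α c : ℝ} (hα : 1 < α) (hc : 0 < c) {X : Ω → ℝ} (hX : ∀ ω, 0 ≤ X ω)
    (hY : ∫⁻ ω, ENNReal.ofReal (exp (c * log (1 + X ω) ^ α)) ∂μ < ⊤) :
    ∃ K > 0, ∀ᶠ p : ℝ in atTop,
      ∫⁻ ω, ENNReal.ofReal (X ω ^ p) ∂μ ≤ ENNReal.ofReal (exp (K * p ^ (α / (α - 1)))) := by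
  set β := α / (α - 1)
  have hαβ : α.HolderConjugate β := HolderConjugate.conjExponent hα
  obtain ⟨K, hK, hyoung⟩ := exists_mul_le_mul_rpow_add_mul_rpow hαβ hc
  have hpoint : ∀ p, 0 ≤ p → ∀ ω,
      X ω ^ p ≤ exp (K * p ^ β) * exp (c * log (1 + X ω) ^ α) := fun p hp ω => by
    have h1X : 0 < 1 + X ω := by linarith [hX ω]
    calc X ω ^ p ≤ (1 + X ω) ^ p := rpow_le_rpow (hX ω) (by linarith) hp
      _ = exp (p * log (1 + X ω)) := by rw [rpow_def_of_pos h1X, mul_comm]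
      _ ≤ exp (K * p ^ β + c * log (1 + X ω) ^ α) :=
        exp_le_exp.2 (hyoung p _ hp (log_nonneg (by linarith [hX ω])))
      _ = exp (K * p ^ β) * exp (c * log (1 + X ω) ^ α) := exp_add _ _
  have hexp : Tendsto (fun p : ℝ => exp (p ^ β)) atTop atTop :=
    tendsto_exp_atTop.comp (tendsto_rpow_atTop hαβ.symm.pos)
  refine ⟨K + 1, by positivity, ?_⟩
  filter_upwards [eventually_ge_atTop 0, hexp.eventually_ge_atTop (∫⁻ ω,
    ENNReal.ofReal (exp (c * log (1 + X ω) ^ α)) ∂μ).toReal] with p hp hpY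
  calc ∫⁻ ω, ENNReal.ofReal (X ω ^ p) ∂μ
      ≤ ∫⁻ ω, ENNReal.ofReal (exp (K * p ^ β)) * ENNReal.ofReal (exp (c * log (1 + X ω) ^ α)) ∂μ :=
        lintegral_mono fun ω => by
          rw [← ENNReal.ofReal_mul (exp_nonneg _)]
          exact ENNReal.ofReal_le_ofReal (hpoint p hp ω)
    _ = ENNReal.ofReal (exp (K * p ^ β)) *
          ∫⁻ ω, ENNReal.ofReal (exp (c * log (1 + X ω) ^ α)) ∂μ :=
        lintegral_const_mul' _ _ ENNReal.ofReal_ne_top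
    _ ≤ ENNReal.ofReal (exp (K * p ^ β)) * ENNReal.ofReal (exp (p ^ β)) := by
        gcongr
        rw [← ENNReal.ofReal_toReal hY.ne]
        exact ENNReal.ofReal_le_ofReal hpY
    _ = ENNReal.ofReal (exp ((K + 1) * p ^ β)) := by
        rw [← ENNReal.ofReal_mul (exp_nonneg _), ← exp_add, add_mul, one_mul]

/-- If `P(X ≥ x) ≤ exp(-(1/C) log^α(1+x))` for all large `x` (some `C > 0`),
then there is `C' > 0` such that `E[X^p] ≤ exp(C' p^(α/(α-1)))` for all large `p`. -/
theorem moment_bound_of_tail_bound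
    {Ω : Type*} [MeasurableSpace Ω] (μ : Measure Ω) [IsProbabilityMeasure μ]
    (α : ℝ) (hα : 1 < α) (X : Ω → ℝ) (hX : Measurable X) (hXpos : ∀ ω, 0 ≤ X ω)
    (h : ∃ C > 0, ∀ᶠ x : ℝ in atTop,
      μ {ω | x ≤ X ω} ≤ ENNReal.ofReal (Real.exp (-(1 / C) * (Real.log (1 + x)) ^ α))) :
    ∃ C > 0, ∀ᶠ p : ℝ in atTop,
      ∫⁻ ω, ENNReal.ofReal (X ω ^ p) ∂μ
        ≤ ENNReal.ofReal (Real.exp (C * p ^ (α / (α - 1)))) := by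
  obtain ⟨C, hC, htail⟩ := h
  have hY : ∫⁻ ω, ENNReal.ofReal (exp ((2 * C)⁻¹ * log (1 + X ω) ^ α)) ∂μ < ⊤ :=
    lintegral_ofReal_lt_top_of_meas_lt_le_rpow_neg (by fun_prop)
      (ae_of_all _ fun _ => (exp_pos _).le) one_lt_two
      (meas_lt_exp_mul_log_rpow_le_rpow_neg (by linarith) hC two_pos hXpos htail)
  exact exists_lintegral_rpow_le_exp_of_lintegral_exp_lt_top hα (by positivity) hXpos hY
end

section
/- Let α > 1 and let X be a positive random variable. If there exists C > 0 such that for all sufficiently large p, E[X^p] ≤ exp(C p^(α/(α−1))), then there exists C' > 0 such that E[exp((1/C') log^α(1+X))] < ∞. -/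
/-!
Markov's inequality for the moment of order `p = c s^(α-1)`, with `c` chosen so that
`C p^(α/(α-1)) = (c/2) s^α`, gives `P(X ≥ e^s) ≤ exp(-(c/2) s^α)`, hence a tail bound
`exp(-κ s^α)` for `log (1 + X)`. Splitting `Ω` according to `⌊log (1 + X)⌋₊ = n`, the
contribution of the `n`-th layer to `E[exp(t log^α(1+X))]` is at most
`exp(t (n+1)^α - κ n^α)`, which decays geometrically once `t ≤ κ / 2^(α+1)`.
-/

open MeasureTheory Real Filter

open scoped ENNReal

theorem ENNReal.tsum_ne_top_of_eventually_le {a b : ℕ → ℝ≥0∞} (ha : ∀ n, a n ≠ ∞)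
    (hb : ∑' n, b n ≠ ∞) (hab : ∀ᶠ n in atTop, a n ≤ b n) : ∑' n, a n ≠ ∞ := by
  obtain ⟨N, hN⟩ := eventually_atTop.1 hab
  rw [← ENNReal.summable.sum_add_tsum_nat_add' (k := N)]
  refine ENNReal.add_ne_top.2 ⟨ENNReal.sum_ne_top.2 fun n _ => ha n, ne_top_of_le_ne_top hb ?_⟩
  calc ∑' n, a (n + N) ≤ ∑' n, b (n + N) :=
        ENNReal.tsum_le_tsum fun n => hN _ (Nat.le_add_left _ _)
    _ ≤ ∑' n, b n := ENNReal.tsum_comp_le_tsum_of_injective (add_left_injective N) b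

theorem lintegral_comp_eq_tsum_mul_measure_preimage {Ω : Type*} [MeasurableSpace Ω]
    (μ : Measure Ω) {F : Ω → ℕ} (hF : Measurable F) (g : ℕ → ℝ≥0∞) :
    ∫⁻ ω, g (F ω) ∂μ = ∑' n, g n * μ (F ⁻¹' {n}) := by
  rw [← lintegral_map measurable_from_nat hF, lintegral_countable']
  simp only [Measure.map_apply hF (measurableSet_singleton _)]

theorem mul_rpow_add_one_sub_le {κ α x : ℝ} (hκ : 0 < κ) (hα : 1 ≤ α) (hx : 1 ≤ x) :
    κ / (2 * 2 ^ α) * (x + 1) ^ α - κ * x ^ α ≤ -(κ / 2) * x := by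
  have h2α : (0 : ℝ) < 2 ^ α := by positivity
  have hdouble : (x + 1) ^ α ≤ 2 ^ α * x ^ α := by
    rw [← mul_rpow zero_le_two (by linarith)]
    exact rpow_le_rpow (by linarith) (by linarith) (by linarith)
  have hfirst : κ / (2 * 2 ^ α) * (x + 1) ^ α ≤ κ / 2 * x ^ α := by
    calc κ / (2 * 2 ^ α) * (x + 1) ^ α ≤ κ / (2 * 2 ^ α) * (2 ^ α * x ^ α) := by gcongr
      _ = κ / 2 * x ^ α := by field_simp
  nlinarith [self_le_rpow_of_one_le hx hα]

theorem exp_half_le_of_le_log_one_add {x s : ℝ} (hx : 0 ≤ x) (hs : 2 ≤ s)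
    (h : s ≤ log (1 + x)) : exp (s / 2) ≤ x := by
  have hexp : exp s ≤ 1 + x := (le_log_iff_exp_le (by linarith)).1 h
  have hsq : exp s = exp (s / 2) ^ 2 := by rw [← exp_nat_mul]; ring_nf
  have htwo : 2 ≤ exp (s / 2) := by
    linarith [add_one_le_exp (s / 2)]
  nlinarith

theorem exists_pos_mul_rpow_div_sub_one_eq_half {C α : ℝ} (hC : 0 < C) (hα : 1 < α) :
    ∃ c > 0, C * c ^ (α / (α - 1)) = c / 2 := by
  have hα1 : α - 1 ≠ 0 := by linarith
  set c := (2 * C)⁻¹ ^ (α - 1)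
  have hc : 0 < c := by positivity
  refine ⟨c, hc, ?_⟩
  have hroot : c ^ (1 / (α - 1)) = (2 * C)⁻¹ := by
    rw [← rpow_mul (by positivity), mul_one_div_cancel hα1, rpow_one]
  have hexp : α / (α - 1) = 1 + 1 / (α - 1) := by field_simp; ring
  rw [hexp, rpow_add hc, rpow_one, hroot]
  field_simp

theorem ofReal_rpow_mul_measure_le_lintegral {Ω : Type*} [MeasurableSpace Ω] (μ : Measure Ω)
    {X : Ω → ℝ} (hX : Measurable X) {u p : ℝ} (hu : 0 ≤ u) (hp : 0 ≤ p) :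
    ENNReal.ofReal (u ^ p) * μ {ω | u ≤ X ω} ≤ ∫⁻ ω, ENNReal.ofReal (X ω ^ p) ∂μ := by
  calc ENNReal.ofReal (u ^ p) * μ {ω | u ≤ X ω}
      ≤ ENNReal.ofReal (u ^ p) * μ {ω | ENNReal.ofReal (u ^ p) ≤ ENNReal.ofReal (X ω ^ p)} :=
        mul_le_mul_right (measure_mono fun ω (hω : u ≤ X ω) =>
          ENNReal.ofReal_le_ofReal (rpow_le_rpow hu hω hp)) _
    _ ≤ ∫⁻ ω, ENNReal.ofReal (X ω ^ p) ∂μ := mul_meas_ge_le_lintegral₀ (by fun_prop) _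

theorem measure_exp_le_le_exp_neg_of_lintegral_rpow_le {Ω : Type*} [MeasurableSpace Ω]
    (μ : Measure Ω) {X : Ω → ℝ} (hX : Measurable X) {α C : ℝ} (hα : 1 < α) (hC : 0 < C)
    (hmom : ∀ᶠ p : ℝ in atTop,
      ∫⁻ ω, ENNReal.ofReal (X ω ^ p) ∂μ ≤ ENNReal.ofReal (exp (C * p ^ (α / (α - 1))))) :
    ∃ κ > 0, ∀ᶠ s : ℝ in atTop, μ {ω | exp s ≤ X ω} ≤ ENNReal.ofReal (exp (-κ * s ^ α)) := by
  obtain ⟨c, hc, hcC⟩ := exists_pos_mul_rpow_div_sub_one_eq_half hC hα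
  have hp : Tendsto (fun s : ℝ => c * s ^ (α - 1)) atTop atTop :=
    (tendsto_rpow_atTop (by linarith)).const_mul_atTop hc
  refine ⟨c / 2, by positivity, ?_⟩
  filter_upwards [hp.eventually hmom, eventually_gt_atTop 0] with s hmom_s hs
  set p := c * s ^ (α - 1)
  have hmarkov : ENNReal.ofReal (exp (s * p)) * μ {ω | exp s ≤ X ω}
      ≤ ENNReal.ofReal (exp (C * p ^ (α / (α - 1)))) := by
    rw [exp_mul]
    exact (ofReal_rpow_mul_measure_le_lintegral μ hX (exp_pos s).le (by positivity)).trans hmom_s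
  have hexponent : C * p ^ (α / (α - 1)) - s * p = -(c / 2) * s ^ α := by
    have hpow : p ^ (α / (α - 1)) = c ^ (α / (α - 1)) * s ^ α := by
      rw [mul_rpow hc.le (by positivity), ← rpow_mul hs.le,
        mul_div_cancel₀ _ (sub_ne_zero.2 hα.ne')]
    have hsp : s * p = c * s ^ α := by
      simp only [p, rpow_sub_one hs.ne']
      field_simp
    rw [hpow, ← mul_assoc, hcC, hsp]
    ring
  calc μ {ω | exp s ≤ X ω}
      ≤ ENNReal.ofReal (exp (C * p ^ (α / (α - 1)))) / ENNReal.ofReal (exp (s * p)) := by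
        rw [ENNReal.le_div_iff_mul_le (Or.inl (by simpa using exp_pos _))
          (Or.inl ENNReal.ofReal_ne_top), mul_comm]
        exact hmarkov
    _ = ENNReal.ofReal (exp (-(c / 2) * s ^ α)) := by
        rw [← ENNReal.ofReal_div_of_pos (exp_pos _), ← exp_sub, hexponent]

theorem lintegral_exp_mul_rpow_ne_top_of_measure_le {Ω : Type*} [MeasurableSpace Ω]
    (μ : Measure Ω) [IsFiniteMeasure μ] {f : Ω → ℝ} (hf : Measurable f) (hf0 : ∀ ω, 0 ≤ f ω)
    {α κ : ℝ} (hα : 1 ≤ α) (hκ : 0 < κ)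
    (htail : ∀ᶠ s : ℝ in atTop, μ {ω | s ≤ f ω} ≤ ENNReal.ofReal (exp (-κ * s ^ α))) :
    ∫⁻ ω, ENNReal.ofReal (exp (κ / (2 * 2 ^ α) * f ω ^ α)) ∂μ ≠ ∞ := by
  set t := κ / (2 * 2 ^ α)
  set g : ℕ → ℝ≥0∞ := fun n => ENNReal.ofReal (exp (t * ((n : ℝ) + 1) ^ α))
  have hlayers : ∫⁻ ω, ENNReal.ofReal (exp (t * f ω ^ α)) ∂μ
      ≤ ∑' n, g n * μ {ω | (n : ℝ) ≤ f ω} := by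
    calc ∫⁻ ω, ENNReal.ofReal (exp (t * f ω ^ α)) ∂μ ≤ ∫⁻ ω, g ⌊f ω⌋₊ ∂μ := by
          refine lintegral_mono fun ω => ENNReal.ofReal_le_ofReal (exp_le_exp.2 ?_)
          gcongr
          · exact hf0 ω
          · exact (Nat.lt_floor_add_one _).le
      _ = ∑' n, g n * μ ((fun ω => ⌊f ω⌋₊) ⁻¹' {n}) :=
          lintegral_comp_eq_tsum_mul_measure_preimage μ hf.nat_floor g
      _ ≤ ∑' n, g n * μ {ω | (n : ℝ) ≤ f ω} := by
          refine ENNReal.tsum_le_tsum fun n => mul_le_mul_right (measure_mono ?_) _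
          rintro ω (rfl : ⌊f ω⌋₊ = n)
          exact Nat.floor_le (hf0 ω)
  refine ne_top_of_le_ne_top (ENNReal.tsum_ne_top_of_eventually_le
    (b := fun n => ENNReal.ofReal (exp (-(κ / 2))) ^ n) ?_ ?_ ?_) hlayers
  · exact fun n => ENNReal.mul_ne_top ENNReal.ofReal_ne_top (measure_ne_top _ _)
  · have hr : ENNReal.ofReal (exp (-(κ / 2))) < 1 :=
      ENNReal.ofReal_lt_one.2 (exp_lt_one_iff.2 (by linarith))
    rw [ENNReal.tsum_geometric, ENNReal.inv_ne_top]
    exact (tsub_pos_of_lt hr).ne'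
  · filter_upwards [tendsto_natCast_atTop_atTop.eventually htail, eventually_ge_atTop 1]
      with n htail_n hn
    calc g n * μ {ω | (n : ℝ) ≤ f ω} ≤ g n * ENNReal.ofReal (exp (-κ * (n : ℝ) ^ α)) :=
          mul_le_mul_right htail_n _
      _ = ENNReal.ofReal (exp (t * ((n : ℝ) + 1) ^ α - κ * (n : ℝ) ^ α)) := by
          rw [← ENNReal.ofReal_mul (exp_nonneg _), ← exp_add, neg_mul, ← sub_eq_add_neg]
      _ ≤ ENNReal.ofReal (exp (-(κ / 2) * n)) :=
          ENNReal.ofReal_le_ofReal (exp_le_exp.2 (mul_rpow_add_one_sub_le hκ hα (mod_cast hn)))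
      _ = ENNReal.ofReal (exp (-(κ / 2))) ^ n := by
          rw [← ENNReal.ofReal_pow (exp_nonneg _), ← exp_nat_mul, mul_comm]

/-- If `E[X^p] ≤ exp(C p^(α/(α-1)))` for all large `p` (some `C > 0`),
then there is `C' > 0` such that `E[exp((1/C') log^α(1+X))] < ∞`. -/
theorem exp_log_moment_of_moment_bound
    {Ω : Type*} [MeasurableSpace Ω] (μ : Measure Ω) [IsProbabilityMeasure μ]
    (α : ℝ) (hα : 1 < α) (X : Ω → ℝ) (hX : Measurable X) (hXpos : ∀ ω, 0 ≤ X ω)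
    (h : ∃ C > 0, ∀ᶠ p : ℝ in atTop,
      ∫⁻ ω, ENNReal.ofReal (X ω ^ p) ∂μ
        ≤ ENNReal.ofReal (Real.exp (C * p ^ (α / (α - 1))))) :
    ∃ C > 0,
      ∫⁻ ω, ENNReal.ofReal (Real.exp ((1 / C) * (Real.log (1 + X ω)) ^ α)) ∂μ < ⊤ := by
  obtain ⟨C, hC, hmom⟩ := h
  obtain ⟨κ, hκ, htail⟩ := measure_exp_le_le_exp_neg_of_lintegral_rpow_le μ hX hα hC hmom
  have hlog_tail : ∀ᶠ s : ℝ in atTop, μ {ω | s ≤ log (1 + X ω)}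
      ≤ ENNReal.ofReal (exp (-(κ / 2 ^ α) * s ^ α)) := by
    have hhalf : Tendsto (fun s : ℝ => s / 2) atTop atTop := tendsto_id.atTop_div_const two_pos
    filter_upwards [hhalf.eventually htail, eventually_ge_atTop 2] with s htail_s hs
    calc μ {ω | s ≤ log (1 + X ω)} ≤ μ {ω | exp (s / 2) ≤ X ω} :=
          measure_mono fun ω => exp_half_le_of_le_log_one_add (hXpos ω) hs
      _ ≤ ENNReal.ofReal (exp (-(κ / 2 ^ α) * s ^ α)) := by
          rwa [div_rpow (by linarith) zero_le_two, ← mul_div_assoc, mul_div_right_comm, neg_div] at htail_s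
  have hfin := lintegral_exp_mul_rpow_ne_top_of_measure_le μ
    (hX.const_add 1).log (fun ω => log_nonneg (by linarith [hXpos ω])) hα.le
    (by positivity) hlog_tail
  exact ⟨1 / (κ / 2 ^ α / (2 * 2 ^ α)), by positivity, by rwa [one_div_one_div, lt_top_iff_ne_top]⟩
end

section
/- Let r̃(x,ε) := inf{ r ≥ 1 : ∀ρ ≥ r, ⨍_{B_ρ(x)} |f − m| ≤ ε m } for a fixed nonnegative locally integrable f: ℝ^d → ℝ and constant m > 0, and let r̲(x,ε) := inf_y (r̃(y,ε) + |x−y|/8). Then r̃(x, 9^d ε) ≤ r̲(x, ε) ≤ r̃(x, ε) for all x and ε > 0. -/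
/-!
If `r̃(y, ε) ≤ R` and `|x - y| ≤ 8ρ` with `ρ ≥ R`, then `B_ρ(x) ⊆ B_{9ρ}(y)` and the two balls
differ in volume by the factor `9^d`, so the average deviation over `B_ρ(x)` is at most `9^d ε m`.
Hence `r̃(x, 9^d ε) ≤ max (r̃(y, ε)) (|x - y| / 8) ≤ r̃(y, ε) + |x - y| / 8` for every `y`; the upper
bound by `r̃(x, ε)` is the choice `y = x`.
-/

open MeasureTheory Metric Module

/-- The paper's `r̃(x, δ)` is `minimalScale P` for `P ρ` the averaged condition on `B_ρ(x)`. -/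
noncomputable def minimalScale (P : ℝ → Prop) : ℝ :=
  sInf {r : ℝ | 1 ≤ r ∧ ∀ ρ, r ≤ ρ → P ρ}

lemma minimalScale_nonneg (P : ℝ → Prop) : 0 ≤ minimalScale P :=
  Real.sInf_nonneg fun _ hr => zero_le_one.trans hr.1

lemma minimalScale_le_add {P Q : ℝ → Prop} {a c : ℝ} (ha : 0 ≤ a) (hc : 1 ≤ c)
    (hQ : {r : ℝ | 1 ≤ r ∧ ∀ ρ, r ≤ ρ → Q ρ}.Nonempty)
    (hPQ : ∀ ρ, 1 ≤ ρ → a ≤ ρ → Q (c * ρ) → P ρ) :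
    minimalScale P ≤ minimalScale Q + a := by
  suffices ∀ r, 1 ≤ r → (∀ ρ, r ≤ ρ → Q ρ) → minimalScale P ≤ r + a by
    rw [← sub_le_iff_le_add]
    exact le_csInf hQ fun r hr => sub_le_iff_le_add.mpr (this r hr.1 hr.2)
  intro r hr1 hr
  have hmem : max r a ∈ {s : ℝ | 1 ≤ s ∧ ∀ ρ, s ≤ ρ → P ρ} := by
    refine ⟨le_max_of_le_left hr1, fun ρ hρ => ?_⟩
    have hρ1 : 1 ≤ ρ := hr1.trans ((le_max_left _ _).trans hρ)
    refine hPQ ρ hρ1 ((le_max_right _ _).trans hρ) (hr _ ?_)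
    nlinarith [le_max_left r a]
  exact (csInf_le ⟨1, fun _ hs => hs.1⟩ hmem).trans
    (max_le_add_of_nonneg (zero_le_one.trans hr1) ha)

section Averages

variable {E : Type*} [NormedAddCommGroup E] [NormedSpace ℝ E] [FiniteDimensional ℝ E]
  [MeasurableSpace E] [BorelSpace E] (μ : Measure E) [μ.IsAddHaarMeasure]

lemma setAverage_ball_le_pow_mul_setAverage_ball {g : E → ℝ} (hg : ∀ z, 0 ≤ g z)
    {x y : E} {ρ c : ℝ} (hc : 0 < c) (hsub : ball x ρ ⊆ ball y (c * ρ))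
    (hint : IntegrableOn g (ball y (c * ρ)) μ) :
    ⨍ z in ball x ρ, g z ∂μ ≤ c ^ finrank ℝ E * ⨍ z in ball y (c * ρ), g z ∂μ := by
  have hvol : μ.real (ball y (c * ρ)) = c ^ finrank ℝ E * μ.real (ball x ρ) := by
    rw [measureReal_def, Measure.addHaar_ball_mul_of_pos μ y hc, ENNReal.toReal_mul,
      ENNReal.toReal_ofReal (by positivity), ← measureReal_def,
      Measure.addHaar_real_ball_center μ x]
  have hcd : c ^ finrank ℝ E ≠ 0 := by positivity
  rw [setAverage_eq, setAverage_eq, hvol, smul_eq_mul, smul_eq_mul, mul_inv,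
    ← mul_assoc, ← mul_assoc, mul_inv_cancel₀ hcd, one_mul]
  exact mul_le_mul_of_nonneg_left
    (setIntegral_mono_set hint (.of_forall fun z => hg z) hsub.eventuallyLE) (by positivity)

end Averages

theorem lipschitz_minorant_of_minimal_scale_general
    (d : ℕ) (f : EuclideanSpace ℝ (Fin d) → ℝ) (hf : LocallyIntegrable f volume)
    (m : ℝ)
    (rt : EuclideanSpace ℝ (Fin d) → ℝ → ℝ)
    (hrt : ∀ x δ, rt x δ =
      sInf {r : ℝ | 1 ≤ r ∧ ∀ ρ : ℝ, r ≤ ρ →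
        (volume (ball x ρ)).toReal⁻¹ * (∫ z in ball x ρ, |f z - m|) ≤ δ * m})
    (hne : ∀ (x : EuclideanSpace ℝ (Fin d)) (δ : ℝ), 0 < δ →
      {r : ℝ | 1 ≤ r ∧ ∀ ρ : ℝ, r ≤ ρ →
        (volume (ball x ρ)).toReal⁻¹ * (∫ z in ball x ρ, |f z - m|) ≤ δ * m}.Nonempty)
    (ε : ℝ) (hε : 0 < ε) :
    ∀ x, rt x ((9 : ℝ) ^ d * ε) ≤ (⨅ y, (rt y ε + ‖x - y‖ / 8)) ∧
      (⨅ y, (rt y ε + ‖x - y‖ / 8)) ≤ rt x ε := by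
  intro x
  have hrt' : ∀ x δ, rt x δ = minimalScale fun ρ => ⨍ z in ball x ρ, |f z - m| ≤ δ * m := by
    intro x δ
    simp only [hrt, minimalScale, setAverage_eq, smul_eq_mul, measureReal_def]
  have key : ∀ y, rt x ((9 : ℝ) ^ d * ε) ≤ rt y ε + ‖x - y‖ / 8 := by
    intro y
    rw [hrt', hrt']
    refine minimalScale_le_add (c := 9) (by positivity) (by norm_num) ?_ fun ρ hρ1 hρ hQ => ?_
    · simpa only [setAverage_eq, smul_eq_mul, measureReal_def] using hne y ε hε
    have hsub : ball x ρ ⊆ ball y (9 * ρ) :=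
      ball_subset_ball' (by rw [dist_eq_norm]; linarith)
    have hint : IntegrableOn (fun z => |f z - m|) (ball y (9 * ρ)) volume :=
      (((hf.integrableOn_isCompact (isCompact_closedBall y (9 * ρ))).mono_set
        ball_subset_closedBall).sub (integrableOn_const measure_ball_lt_top.ne)).abs
    calc ⨍ z in ball x ρ, |f z - m|
        ≤ 9 ^ d * ⨍ z in ball y (9 * ρ), |f z - m| := by
          simpa only [finrank_euclideanSpace_fin] using
            setAverage_ball_le_pow_mul_setAverage_ball volume (fun z => abs_nonneg _)
              (by norm_num) hsub hint
      _ ≤ 9 ^ d * (ε * m) := by gcongr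
      _ = 9 ^ d * ε * m := by ring
  have hbdd : BddBelow (Set.range fun y => rt y ε + ‖x - y‖ / 8) :=
    ⟨0, Set.forall_mem_range.mpr fun y => by
      rw [hrt']; exact add_nonneg (minimalScale_nonneg _) (by positivity)⟩
  exact ⟨le_ciInf key, (ciInf_le hbdd x).trans_eq (by simp)⟩

/-- with `r̃(x,δ) = inf{r ≥ 1 : ∀ρ ≥ r, ⨍_{B_ρ(x)} |f-m| ≤ δ m}` and
`r̲(x,δ) = inf_y (r̃(y,δ) + |x-y|/8)` (the maximal (1/8)-Lipschitz minorant), one has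
`r̃(x, 9^d δ) ≤ r̲(x,δ) ≤ r̃(x,δ)`. -/
theorem lipschitz_minorant_of_minimal_scale
    (d : ℕ) (f : EuclideanSpace ℝ (Fin d) → ℝ) (hf : LocallyIntegrable f volume)
    (m : ℝ) (hm : 0 < m)
    (rt : EuclideanSpace ℝ (Fin d) → ℝ → ℝ)
    (hrt : ∀ x δ, rt x δ =
      sInf {r : ℝ | 1 ≤ r ∧ ∀ ρ : ℝ, r ≤ ρ →
        (volume (ball x ρ)).toReal⁻¹ * (∫ z in ball x ρ, |f z - m|) ≤ δ * m})
    (hne : ∀ (x : EuclideanSpace ℝ (Fin d)) (δ : ℝ), 0 < δ →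
      {r : ℝ | 1 ≤ r ∧ ∀ ρ : ℝ, r ≤ ρ →
        (volume (ball x ρ)).toReal⁻¹ * (∫ z in ball x ρ, |f z - m|) ≤ δ * m}.Nonempty)
    (ε : ℝ) (hε : 0 < ε) :
    ∀ x, rt x ((9 : ℝ) ^ d * ε) ≤ (⨅ y, (rt y ε + ‖x - y‖ / 8)) ∧
      (⨅ y, (rt y ε + ‖x - y‖ / 8)) ≤ rt x ε :=
  lipschitz_minorant_of_minimal_scale_general d f hf m rt hrt hne ε hε
end
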